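/- Let n be a nonzero integer. Then there is no nonzero rational function r ∈ ℂ(z) satisfying r(z²) = (1 − z)^{−n}·r(z). -/

import Mathlib

/-!
Measure a nonzero rational function by its order of vanishing at `z = 1`. This order is
additive, `1 - z` has order `1`, and `z ↦ z²` preserves it because `1` is a simple root of
`z² - 1`. Taking orders on both sides of `r(z²) = (1 - z)^(-n) r(z)` gives `ord r = -n + ord r`.
-/

open Polynomial

namespace Polynomial

variable {R : Type*} [CommRing R]

theorem rootMultiplicity_X_sub_C_pow_mul {a : R} {u : R[X]} (hu : u.eval a ≠ 0) (k : ℕ) :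
    ((X - C a) ^ k * u).rootMultiplicity a = k := by
  have hu0 : u ≠ 0 := fun h => hu (by simp [h])
  rw [mul_comm, rootMultiplicity_mul_X_sub_C_pow hu0, rootMultiplicity_eq_zero hu, zero_add]

theorem rootMultiplicity_C_sub_X [Nontrivial R] (a : R) : (C a - X).rootMultiplicity a = 1 := by
  have h := rootMultiplicity_X_sub_C_pow_mul (a := a) (u := C (-1)) (by simp) 1
  rwa [pow_one, map_neg, map_one, mul_neg_one, neg_sub] at h

variable [IsDomain R]

/-- `q'(a) ≠ 0` makes `a` a simple root of `q - q(a)`, so composing with `q` moves a root of `p`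
at `q(a)` to a root at `a` of the same multiplicity. -/
theorem exists_comp_eq_X_sub_C_pow_mul {p q : R[X]} {a : R} (hp : p ≠ 0)
    (hq : (derivative q).eval a ≠ 0) :
    ∃ w : R[X], p.comp q = (X - C a) ^ p.rootMultiplicity (q.eval a) * w ∧ w.eval a ≠ 0 := by
  set b := q.eval a
  obtain ⟨u, hpu, hu⟩ := p.exists_eq_pow_rootMultiplicity_mul_and_not_dvd hp b
  have hub : u.eval b ≠ 0 := fun h => hu (dvd_iff_isRoot.mpr h)
  set s := (q - C b) /ₘ (X - C a)
  have hs : (X - C a) * s = q - C b := mul_divByMonic_eq_iff_isRoot.mpr (by simp [b])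
  have hsa : s.eval a = (derivative q).eval a := by
    simpa using congrArg (fun f => (derivative f).eval a) hs
  refine ⟨s ^ p.rootMultiplicity b * u.comp q, ?_, ?_⟩
  · conv_lhs => rw [hpu]
    rw [mul_comp, pow_comp, sub_comp, X_comp, C_comp, ← hs, mul_pow, mul_assoc]
  · rw [eval_mul, eval_pow, eval_comp, hsa]
    exact mul_ne_zero (pow_ne_zero _ hq) hub

theorem comp_ne_zero_of_derivative_eval_ne_zero {p q : R[X]} {a : R} (hp : p ≠ 0)
    (hq : (derivative q).eval a ≠ 0) : p.comp q ≠ 0 := by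
  obtain ⟨w, hpq, hw⟩ := exists_comp_eq_X_sub_C_pow_mul hp hq
  rw [hpq]
  exact mul_ne_zero (pow_ne_zero _ (X_sub_C_ne_zero a)) fun h => hw (by simp [h])

theorem rootMultiplicity_comp_of_derivative_eval_ne_zero (p : R[X]) {q : R[X]} {a : R}
    (hq : (derivative q).eval a ≠ 0) :
    (p.comp q).rootMultiplicity a = p.rootMultiplicity (q.eval a) := by
  rcases eq_or_ne p 0 with rfl | hp
  · simp
  obtain ⟨w, hpq, hw⟩ := exists_comp_eq_X_sub_C_pow_mul hp hq
  rw [hpq, rootMultiplicity_X_sub_C_pow_mul hw]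

end Polynomial

namespace RatFunc

variable {K : Type*} [Field K]

noncomputable def orderAt (a : K) (r : RatFunc K) : ℤ :=
  (r.num.rootMultiplicity a : ℤ) - r.denom.rootMultiplicity a

variable (a : K)

theorem orderAt_div_algebraMap {p q : K[X]} (hp : p ≠ 0) (hq : q ≠ 0) :
    orderAt a (algebraMap K[X] (RatFunc K) p / algebraMap K[X] (RatFunc K) q) =
      (p.rootMultiplicity a : ℤ) - q.rootMultiplicity a := by
  set r := algebraMap K[X] (RatFunc K) p / algebraMap K[X] (RatFunc K) q
  have hr : r ≠ 0 := div_ne_zero (algebraMap_ne_zero hp) (algebraMap_ne_zero hq)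
  have h : r.num * q = p * r.denom := (num_mul_eq_mul_denom_iff hq).mpr rfl
  have := congrArg (rootMultiplicity a) h
  rw [rootMultiplicity_mul (mul_ne_zero (num_ne_zero hr) hq),
    rootMultiplicity_mul (mul_ne_zero hp (denom_ne_zero r))] at this
  unfold orderAt
  omega

theorem orderAt_algebraMap {p : K[X]} (hp : p ≠ 0) :
    orderAt a (algebraMap K[X] (RatFunc K) p) = p.rootMultiplicity a := by
  have h := orderAt_div_algebraMap a hp one_ne_zero
  rwa [map_one, div_one, ← C_1, rootMultiplicity_C, Nat.cast_zero, sub_zero] at h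

variable {a}

theorem orderAt_mul {r s : RatFunc K} (hr : r ≠ 0) (hs : s ≠ 0) :
    orderAt a (r * s) = orderAt a r + orderAt a s := by
  have h : r * s = algebraMap K[X] (RatFunc K) (r.num * s.num) /
      algebraMap K[X] (RatFunc K) (r.denom * s.denom) := by
    rw [map_mul, map_mul, ← div_mul_div_comm, num_div_denom, num_div_denom]
  have hnum := mul_ne_zero (num_ne_zero hr) (num_ne_zero hs)
  have hden := mul_ne_zero (denom_ne_zero r) (denom_ne_zero s)
  rw [h, orderAt_div_algebraMap a hnum hden, rootMultiplicity_mul hnum, rootMultiplicity_mul hden,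
    orderAt, orderAt]
  push_cast
  ring

theorem orderAt_inv {r : RatFunc K} (hr : r ≠ 0) : orderAt a r⁻¹ = -orderAt a r := by
  have h : r⁻¹ = algebraMap K[X] (RatFunc K) r.denom / algebraMap K[X] (RatFunc K) r.num := by
    rw [← inv_div, num_div_denom]
  rw [h, orderAt_div_algebraMap a (denom_ne_zero r) (num_ne_zero hr), orderAt, neg_sub]

theorem orderAt_zpow {r : RatFunc K} (hr : r ≠ 0) (n : ℤ) :
    orderAt a (r ^ n) = n * orderAt a r := by
  induction n using Int.induction_on with
  | zero => simp [orderAt]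
  | succ n ih => rw [zpow_add_one₀ hr, orderAt_mul (zpow_ne_zero _ hr) hr, ih]; ring
  | pred n ih =>
    rw [zpow_sub_one₀ hr, orderAt_mul (zpow_ne_zero _ hr) (inv_ne_zero hr), ih, orderAt_inv hr]
    ring

theorem eval₂_C_algebraMap (p q : K[X]) :
    p.eval₂ C (algebraMap K[X] (RatFunc K) q) = algebraMap K[X] (RatFunc K) (p.comp q) := by
  rw [comp, hom_eval₂, algebraMap_comp_C]

theorem orderAt_eval_algebraMap {r : RatFunc K} (hr : r ≠ 0) {q : K[X]}
    (hq : (derivative q).eval a ≠ 0) :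
    orderAt a (r.eval C (algebraMap K[X] (RatFunc K) q)) = orderAt (q.eval a) r := by
  rw [eval, eval₂_C_algebraMap, eval₂_C_algebraMap,
    orderAt_div_algebraMap a (comp_ne_zero_of_derivative_eval_ne_zero (num_ne_zero hr) hq)
      (comp_ne_zero_of_derivative_eval_ne_zero (denom_ne_zero r) hq),
    rootMultiplicity_comp_of_derivative_eval_ne_zero _ hq,
    rootMultiplicity_comp_of_derivative_eval_ne_zero _ hq, orderAt]

end RatFunc

/-- `RatFunc.eval` at `X²` is the honest substitution `r(z²)`: the denominator of `r` never
evaluates to `0` at `X²`. -/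
theorem no_ratFunc_solution_homog_two
    (n : ℤ) (hn : n ≠ 0) :
    ¬ ∃ r : RatFunc ℂ, r ≠ 0 ∧
        RatFunc.eval RatFunc.C (RatFunc.X ^ 2) r =
          (1 - RatFunc.X) ^ (-n) * r := by
  rintro ⟨r, hr, h⟩
  have hX2 : (RatFunc.X ^ 2 : RatFunc ℂ) = algebraMap ℂ[X] (RatFunc ℂ) (X ^ 2) := by
    rw [map_pow, RatFunc.algebraMap_X]
  have h1X : (1 - RatFunc.X : RatFunc ℂ) = algebraMap ℂ[X] (RatFunc ℂ) (C 1 - X) := by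
    rw [map_sub, RatFunc.algebraMap_C, RatFunc.algebraMap_X, map_one]
  have h1X0 : (C 1 - X : ℂ[X]) ≠ 0 := fun h => by simpa using congrArg (eval 0) h
  have hsimple : (derivative (X ^ 2 : ℂ[X])).eval 1 ≠ 0 := by simp
  have h1X0' := RatFunc.algebraMap_ne_zero h1X0
  have hord := congrArg (RatFunc.orderAt 1) h
  rw [hX2, RatFunc.orderAt_eval_algebraMap hr hsimple, h1X,
    RatFunc.orderAt_mul (zpow_ne_zero _ h1X0') hr, RatFunc.orderAt_zpow h1X0',
    RatFunc.orderAt_algebraMap _ h1X0, rootMultiplicity_C_sub_X, eval_pow, eval_X, one_pow]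
    at hord
  omega
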